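/- arXiv:1607.00268 — 4 statements merged into one kernel-verified Lean document; each statement's English description precedes it below -/
import Mathlib

section
/- Let f : ℝ → ℝ be locally Lipschitz on [0,T] satisfying f'(t) ≥ -α f(t)² - C f(t) for a.e. t, with α, C > 0 and f(0) = ω° ≥ 0. Then f(t) ≥ C e^{-Ct} ω° / (C + α(1 - e^{-Ct}) ω°) for all t ∈ [0,T]. -/
/-!
The function `ψ t = C e^{-Ct} ω₀ / (C + α (1 - e^{-Ct}) ω₀)` solves `ψ' = -α ψ² - C ψ`, `ψ 0 = ω₀`.
Wherever `f < ψ`, the differential inequality gives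
`(f - ψ)' ≥ α (ψ² - f²) + C (ψ - f) = (α (f + ψ) + C) (ψ - f) ≥ 0`, using `f, ψ ≥ 0`.
Hence `f - ψ`, which vanishes at `0`, cannot become negative: after its last zero before a point
where it were negative it would be nondecreasing. Since Lipschitz functions are absolutely
continuous, the fundamental theorem of calculus turns the a.e. sign of the derivative into
monotonicity.
-/

open MeasureTheory Set

namespace AbsolutelyContinuousOnInterval

variable {u u' : ℝ → ℝ} {a b : ℝ}

theorem le_of_ae_hasDerivAt_nonneg (hab : a ≤ b) (hu : AbsolutelyContinuousOnInterval u a b)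
    (hd : ∀ᵐ t, t ∈ Ioo a b → HasDerivAt u (u' t) t)
    (hpos : ∀ᵐ t, t ∈ Ioo a b → 0 ≤ u' t) :
    u a ≤ u b := by
  have hderiv : 0 ≤ᵐ[volume.restrict (Icc a b)] deriv u := by
    rw [← Measure.restrict_congr_set Ioo_ae_eq_Icc]
    refine (ae_restrict_iff' measurableSet_Ioo).2 ?_
    filter_upwards [hd, hpos] with t hdt hpt ht
    exact (hdt ht).deriv ▸ hpt ht
  linarith [hu.integral_deriv_eq_sub, intervalIntegral.integral_nonneg_of_ae_restrict hab hderiv]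

theorem nonneg_of_ae_hasDerivAt_nonneg_of_neg (hab : a ≤ b)
    (hu : AbsolutelyContinuousOnInterval u a b) (ha : 0 ≤ u a)
    (hd : ∀ᵐ t, t ∈ Ioo a b → HasDerivAt u (u' t) t)
    (hneg : ∀ᵐ t, t ∈ Ioo a b → u t < 0 → 0 ≤ u' t) :
    0 ≤ u b := by
  by_contra! hb
  have hS : IsCompact {t ∈ Icc a b | 0 ≤ u t} := by
    refine isCompact_Icc.of_isClosed_subset ?_ (sep_subset _ _)
    have hc : ContinuousOn u (Icc a b) := uIcc_of_le hab ▸ hu.continuousOn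
    exact hc.preimage_isClosed_of_isClosed isClosed_Icc isClosed_Ici
  obtain ⟨s, ⟨⟨has, hsb⟩, hus⟩, hmax⟩ := hS.exists_isGreatest ⟨a, ⟨le_rfl, hab⟩, ha⟩
  have hsb' : s < b := hsb.lt_of_ne (by rintro rfl; linarith)
  have hneg_after : ∀ t ∈ Ioo s b, u t < 0 := fun t ht ↦
    not_le.1 fun h ↦ (hmax ⟨⟨has.trans ht.1.le, ht.2.le⟩, h⟩).not_gt ht.1
  have hsub : Ioo s b ⊆ Ioo a b := Ioo_subset_Ioo_left has
  have hu_sb : AbsolutelyContinuousOnInterval u s b :=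
    hu.mono (by simp only [uIcc_of_le hab, uIcc_of_le hsb'.le, Icc_subset_Icc_left has])
  have := hu_sb.le_of_ae_hasDerivAt_nonneg hsb'.le (hd.mono fun t h ht ↦ h (hsub ht))
    (hneg.mono fun t h ht ↦ h (hsub ht) (hneg_after t ht))
  linarith

end AbsolutelyContinuousOnInterval

section Riccati

variable {α C ω t : ℝ}

noncomputable def riccatiSolution (α C ω t : ℝ) : ℝ :=
  C * Real.exp (-(C * t)) * ω / (C + α * (1 - Real.exp (-(C * t))) * ω)

theorem riccati_denom_pos (hα : 0 ≤ α) (hC : 0 < C) (hω : 0 ≤ ω) (ht : 0 ≤ t) :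
    0 < C + α * (1 - Real.exp (-(C * t))) * ω := by
  have : Real.exp (-(C * t)) ≤ 1 := Real.exp_le_one_iff.2 (by nlinarith)
  have : 0 ≤ α * (1 - Real.exp (-(C * t))) * ω := by bound
  linarith

theorem riccatiSolution_zero (hC : C ≠ 0) : riccatiSolution α C ω 0 = ω := by
  simp [riccatiSolution, hC]

theorem riccatiSolution_nonneg (hα : 0 ≤ α) (hC : 0 < C) (hω : 0 ≤ ω) (ht : 0 ≤ t) :
    0 ≤ riccatiSolution α C ω t :=
  div_nonneg (by positivity) (riccati_denom_pos hα hC hω ht).le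

theorem hasDerivAt_riccatiSolution (h : C + α * (1 - Real.exp (-(C * t))) * ω ≠ 0) :
    HasDerivAt (riccatiSolution α C ω)
      (-α * riccatiSolution α C ω t ^ 2 - C * riccatiSolution α C ω t) t := by
  have hE : HasDerivAt (fun t ↦ Real.exp (-(C * t))) (Real.exp (-(C * t)) * -C) t := by
    simpa using ((hasDerivAt_id t).const_mul C).neg.exp
  refine (((hE.const_mul C).mul_const ω).div
    (((hE.const_sub 1).const_mul α).mul_const ω |>.const_add C) h).congr_deriv ?_
  simp only [riccatiSolution]
  field_simp
  ring

theorem riccatiSolution_absolutelyContinuousOnInterval (hα : 0 ≤ α) (hC : 0 < C) (hω : 0 ≤ ω)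
    {T : ℝ} (hT : 0 ≤ T) : AbsolutelyContinuousOnInterval (riccatiSolution α C ω) 0 T := by
  refine ContDiffOn.absolutelyContinuousOnInterval (ContDiffOn.div (by fun_prop) (by fun_prop)
    fun s hs ↦ (riccati_denom_pos hα hC hω ?_).ne')
  rw [uIcc_of_le hT] at hs
  exact hs.1

end Riccati

theorem stmt_2_general (T α C ω₀ : ℝ) (hα : 0 < α) (hC : 0 < C) (hω : 0 ≤ ω₀)
    (f f' : ℝ → ℝ) (K : NNReal) (hlip : LipschitzOnWith K f (Set.Icc 0 T))
    (hf0 : f 0 = ω₀) (hnn : ∀ t ∈ Set.Icc (0:ℝ) T, 0 ≤ f t)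
    (hderiv : ∀ᵐ t ∂(volume : Measure ℝ), t ∈ Set.Ioo (0:ℝ) T → HasDerivAt f (f' t) t)
    (hineq : ∀ᵐ t ∂(volume : Measure ℝ), t ∈ Set.Ioo (0:ℝ) T →
      -α * (f t) ^ 2 - C * f t ≤ f' t) :
    ∀ t ∈ Set.Icc (0:ℝ) T,
      C * Real.exp (-(C * t)) * ω₀ / (C + α * (1 - Real.exp (-(C * t))) * ω₀) ≤ f t := by
  intro t₀ ⟨ht₀, ht₀T⟩
  show riccatiSolution α C ω₀ t₀ ≤ f t₀
  set ψ := riccatiSolution α C ω₀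
  have hsub : Ioo 0 t₀ ⊆ Ioo 0 T := Ioo_subset_Ioo_right ht₀T
  have hac : AbsolutelyContinuousOnInterval (f - ψ) 0 t₀ :=
    ((hlip.mono (uIcc_of_le ht₀ ▸ Icc_subset_Icc_right ht₀T)).absolutelyContinuousOnInterval).sub
      (riccatiSolution_absolutelyContinuousOnInterval hα.le hC hω ht₀)
  have hd : ∀ᵐ t, t ∈ Ioo 0 t₀ → HasDerivAt (f - ψ) (f' t - (-α * ψ t ^ 2 - C * ψ t)) t := by
    filter_upwards [hderiv] with t hft ht
    exact (hft (hsub ht)).sub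
      (hasDerivAt_riccatiSolution (riccati_denom_pos hα.le hC hω ht.1.le).ne')
  have hneg : ∀ᵐ t, t ∈ Ioo 0 t₀ → (f - ψ) t < 0 → 0 ≤ f' t - (-α * ψ t ^ 2 - C * ψ t) := by
    filter_upwards [hineq] with t hft ht hlt
    have hf := hnn t ⟨ht.1.le, ht.2.le.trans ht₀T⟩
    have hψ := riccatiSolution_nonneg hα.le hC hω ht.1.le
    have hfψ : f t < ψ t := sub_neg.1 hlt
    nlinarith [hft (hsub ht), mul_nonneg (add_nonneg hf hψ) (sub_nonneg.2 hfψ.le)]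
  have h0 : 0 ≤ (f - ψ) 0 := by simp [ψ, hf0, riccatiSolution_zero hC.ne']
  have := hac.nonneg_of_ae_hasDerivAt_nonneg_of_neg ht₀ h0 hd hneg
  rwa [Pi.sub_apply, sub_nonneg] at this

theorem stmt_2 (T α C ω₀ : ℝ) (hT : 0 < T) (hα : 0 < α) (hC : 0 < C) (hω : 0 ≤ ω₀)
    (f f' : ℝ → ℝ) (K : NNReal) (hlip : LipschitzOnWith K f (Set.Icc 0 T))
    (hf0 : f 0 = ω₀) (hnn : ∀ t ∈ Set.Icc (0:ℝ) T, 0 ≤ f t)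
    (hderiv : ∀ᵐ t ∂(volume : Measure ℝ), t ∈ Set.Ioo (0:ℝ) T → HasDerivAt f (f' t) t)
    (hineq : ∀ᵐ t ∂(volume : Measure ℝ), t ∈ Set.Ioo (0:ℝ) T →
      -α * (f t) ^ 2 - C * f t ≤ f' t) :
    ∀ t ∈ Set.Icc (0:ℝ) T,
      C * Real.exp (-(C * t)) * ω₀ / (C + α * (1 - Real.exp (-(C * t))) * ω₀) ≤ f t :=
  stmt_2_general T α C ω₀ hα hC hω f f' K hlip hf0 hnn hderiv hineq
end

section
/- Let a = e^h with h ∈ W^{1,∞}(ℝ²), and let v ∈ C¹(ℝ²)² satisfy div(a v) = 0. Then ω v = -½|v|² ∇^⊥ h - a^{-1} (div(a S_v))^⊥, where ω = curl v, S_v = v⊗v - ½|v|² Id, and w^⊥ = (-w₂, w₁). -/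
/-!
With `a = e^h` the product rule reads `∂ⱼ(a f) = a (∂ⱼ f + f ∂ⱼ h)`. Expanding `div(a S_v)` this way,
the terms carrying `div v` cancel against a multiple of the constraint `div(a v) = 0`, leaving
`div(a S_v) = a (ω v^⊥ - ½|v|² ∇h)`; divide by `a` and rotate.
-/

section

variable {E : Type*} [NormedAddCommGroup E] [NormedSpace ℝ E] {x : E}

theorem fderiv_exp_mul_apply {h g : E → ℝ} (hh : DifferentiableAt ℝ h x)
    (hg : DifferentiableAt ℝ g x) (w : E) :
    fderiv ℝ (fun y => Real.exp (h y) * g y) x w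
      = Real.exp (h x) * (fderiv ℝ g x w + g x * fderiv ℝ h x w) := by
  rw [fderiv_fun_mul hh.exp hg, fderiv_exp hh]
  simp only [add_apply, FunLike.coe_smul, Pi.smul_apply, smul_eq_mul]
  ring

theorem HasFDerivAt.stress {p q : E → ℝ} {p' q' : E →L[ℝ] ℝ} (hp : HasFDerivAt p p' x)
    (hq : HasFDerivAt q q' x) :
    HasFDerivAt (fun y => q y * q y - 1 / 2 * (p y ^ 2 + q y ^ 2)) (q x • q' - p x • p') x := by
  refine ((hq.fun_mul hq).fun_sub
    (((hp.pow 2).fun_add (hq.pow 2)).const_mul (1 / 2 : ℝ))).congr_fderiv ?_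
  ext w
  simp only [one_div, Nat.add_one_sub_one, pow_one, nsmul_eq_mul, Nat.cast_ofNat, smul_add,
    sub_apply, add_apply, smul_apply, smul_eq_mul]
  ring

/-- The `d'`-row of `div(e^h S_v) = e^h (ω v^⊥ - ½|v|² ∇h)` for the field with components `p` along `d`
and `q` along `d'`. -/
theorem fderiv_exp_mul_stress_add_eq {h p q : E → ℝ} (hh : DifferentiableAt ℝ h x)
    (hp : DifferentiableAt ℝ p x) (hq : DifferentiableAt ℝ q x) {d d' : E}
    (hdiv : fderiv ℝ (fun y => Real.exp (h y) * p y) x d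
      + fderiv ℝ (fun y => Real.exp (h y) * q y) x d' = 0) :
    fderiv ℝ (fun y => Real.exp (h y) * (p y * q y)) x d
      + fderiv ℝ (fun y => Real.exp (h y) * (q y * q y - 1 / 2 * (p y ^ 2 + q y ^ 2))) x d'
      = Real.exp (h x) * (p x * (fderiv ℝ q x d - fderiv ℝ p x d')
        - 1 / 2 * (p x ^ 2 + q x ^ 2) * fderiv ℝ h x d') := by
  have hS := hp.hasFDerivAt.stress hq.hasFDerivAt
  rw [fderiv_exp_mul_apply hh hp, fderiv_exp_mul_apply hh hq] at hdiv
  rw [fderiv_exp_mul_apply hh (hp.fun_mul hq), fderiv_exp_mul_apply hh hS.differentiableAt,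
    hS.fderiv, fderiv_fun_mul hp hq]
  simp only [add_apply, sub_apply, FunLike.coe_smul, Pi.smul_apply, smul_eq_mul]
  linear_combination q x * hdiv

end

theorem stmt_6_general (h : EuclideanSpace ℝ (Fin 2) → ℝ) (hdiff : Differentiable ℝ h)
    (v : EuclideanSpace ℝ (Fin 2) → EuclideanSpace ℝ (Fin 2)) (hv : ContDiff ℝ 1 v)
    (hdivav : ∀ x : EuclideanSpace ℝ (Fin 2),
      fderiv ℝ (fun y => Real.exp (h y) * v y 0) x (EuclideanSpace.single 0 1)
        + fderiv ℝ (fun y => Real.exp (h y) * v y 1) x (EuclideanSpace.single 1 1) = 0) :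
    ∀ x : EuclideanSpace ℝ (Fin 2),
      let a : EuclideanSpace ℝ (Fin 2) → ℝ := fun y => Real.exp (h y)
      let ω : ℝ := fderiv ℝ (fun y => v y 1) x (EuclideanSpace.single 0 1)
        - fderiv ℝ (fun y => v y 0) x (EuclideanSpace.single 1 1)
      let S : Fin 2 → Fin 2 → EuclideanSpace ℝ (Fin 2) → ℝ := fun i j y =>
        v y i * v y j - (if i = j then (1:ℝ)/2 * (v y 0 ^ 2 + v y 1 ^ 2) else 0)
      let divaS : Fin 2 → ℝ := fun j =>
        fderiv ℝ (fun y => a y * S 0 j y) x (EuclideanSpace.single 0 1)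
          + fderiv ℝ (fun y => a y * S 1 j y) x (EuclideanSpace.single 1 1)
      (ω * v x 0 =
          -(1/2) * (v x 0 ^ 2 + v x 1 ^ 2) * (-(fderiv ℝ h x (EuclideanSpace.single 1 1)))
            - (a x)⁻¹ * (-(divaS 1))) ∧
      (ω * v x 1 =
          -(1/2) * (v x 0 ^ 2 + v x 1 ^ 2) * (fderiv ℝ h x (EuclideanSpace.single 0 1))
            - (a x)⁻¹ * (divaS 0)) := by
  intro x a ω S divaS
  have hv' : Differentiable ℝ v := hv.differentiable one_ne_zero
  have hvi (i : Fin 2) : DifferentiableAt ℝ (fun y => v y i) x := by fun_prop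
  have hS1 := fderiv_exp_mul_stress_add_eq (hdiff x) (hvi 0) (hvi 1) (hdivav x)
  have hS0 := fderiv_exp_mul_stress_add_eq (hdiff x) (hvi 1) (hvi 0) ((add_comm _ _).trans (hdivav x))
  have hd1 : divaS 1 = a x * (v x 0 * ω
      - 1 / 2 * (v x 0 ^ 2 + v x 1 ^ 2) * fderiv ℝ h x (EuclideanSpace.single 1 1)) := by
    have hS01 (y) : a y * S 0 1 y = Real.exp (h y) * (v y 0 * v y 1) := by simp [a, S]
    have hS11 (y) : a y * S 1 1 y
        = Real.exp (h y) * (v y 1 * v y 1 - 1 / 2 * (v y 0 ^ 2 + v y 1 ^ 2)) := by simp [a, S]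
    simp only [divaS, hS01, hS11]
    exact hS1
  -- the `j = 0` row is the `j = 1` row with the axes swapped, which flips the sign of `ω`
  have hd0 : divaS 0 = a x * (-(v x 1 * ω)
      - 1 / 2 * (v x 0 ^ 2 + v x 1 ^ 2) * fderiv ℝ h x (EuclideanSpace.single 0 1)) := by
    have hS00 (y) : a y * S 0 0 y
        = Real.exp (h y) * (v y 0 * v y 0 - 1 / 2 * (v y 1 ^ 2 + v y 0 ^ 2)) := by
      simp [a, S, add_comm]
    have hS10 (y) : a y * S 1 0 y = Real.exp (h y) * (v y 1 * v y 0) := by simp [a, S]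
    simp only [divaS, hS00, hS10]
    rw [add_comm, hS0]
    ring
  have ha : a x ≠ 0 := (Real.exp_pos _).ne'
  rw [hd0, hd1]
  constructor <;> field_simp <;> ring

/-- Inhomogeneous Delort-type identity: for `a = e^h` and a `C¹` field `v` with
`div(a v) = 0`, one has `ω v = -½|v|² ∇^⊥h - a⁻¹ (div(a S_v))^⊥` pointwise
(written componentwise, with `w^⊥ = (-w₂, w₁)`). -/
theorem stmt_6 (h : EuclideanSpace ℝ (Fin 2) → ℝ) (K : NNReal) (Mh : ℝ)
    (hdiff : Differentiable ℝ h) (hlip : LipschitzWith K h) (hbdd : ∀ x, |h x| ≤ Mh)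
    (v : EuclideanSpace ℝ (Fin 2) → EuclideanSpace ℝ (Fin 2)) (hv : ContDiff ℝ 1 v)
    (hdivav : ∀ x : EuclideanSpace ℝ (Fin 2),
      fderiv ℝ (fun y => Real.exp (h y) * v y 0) x (EuclideanSpace.single 0 1)
        + fderiv ℝ (fun y => Real.exp (h y) * v y 1) x (EuclideanSpace.single 1 1) = 0) :
    ∀ x : EuclideanSpace ℝ (Fin 2),
      let a : EuclideanSpace ℝ (Fin 2) → ℝ := fun y => Real.exp (h y)
      let ω : ℝ := fderiv ℝ (fun y => v y 1) x (EuclideanSpace.single 0 1)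
        - fderiv ℝ (fun y => v y 0) x (EuclideanSpace.single 1 1)
      let S : Fin 2 → Fin 2 → EuclideanSpace ℝ (Fin 2) → ℝ := fun i j y =>
        v y i * v y j - (if i = j then (1:ℝ)/2 * (v y 0 ^ 2 + v y 1 ^ 2) else 0)
      let divaS : Fin 2 → ℝ := fun j =>
        fderiv ℝ (fun y => a y * S 0 j y) x (EuclideanSpace.single 0 1)
          + fderiv ℝ (fun y => a y * S 1 j y) x (EuclideanSpace.single 1 1)
      (ω * v x 0 =
          -(1/2) * (v x 0 ^ 2 + v x 1 ^ 2) * (-(fderiv ℝ h x (EuclideanSpace.single 1 1)))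
            - (a x)⁻¹ * (-(divaS 1))) ∧
      (ω * v x 1 =
          -(1/2) * (v x 0 ^ 2 + v x 1 ^ 2) * (fderiv ℝ h x (EuclideanSpace.single 0 1))
            - (a x)⁻¹ * (divaS 0)) :=
  stmt_6_general h hdiff v hv hdivav
end

section
/- The function x ↦ x(1 + log_-(√x))² is concave on [0, x₀] for some x₀ > 0, and consequently, for any probability measure μ on ℝ² and any measurable F : ℝ² → ℝ² with small L²(μ) norm, one has ∫ (1 + log_-(|F|))² |F|² dμ ≤ (1 + log_-( ∫|F|² dμ ))² ∫|F|² dμ, where log_-(x) = max(0, -log x). -/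
/-!
For `0 < m ≤ e⁻²` the function `Φ` lies below its tangent line at `m` on all of `[0, ∞)`:
below `1` this is the elementary inequality `b² - a² + a ≤ a e^{2(b-a)}` for `a, b ≥ 1`
(with `a = 1 - log m / 2`, `b = 1 - log y / 2`), and above `1`, where `Φ y = y`, it holds
because the tangent slope `a² - a` exceeds `1`. Lying below a tangent line at every interior
point gives concavity, and integrating the tangent inequality at `m = ∫ |F|² dμ` gives the
Jensen-type bound, since `Φ m ≤ m (1 + log₋ m)²`.
-/

open MeasureTheory Real

lemma concaveOn_of_le_tangent {s : Set ℝ} {f : ℝ → ℝ} (hs : Convex ℝ s)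
    (h : ∀ z ∈ interior s, ∃ c, ∀ y ∈ s, f y ≤ f z + c * (y - z)) :
    ConcaveOn ℝ s f := by
  refine concaveOn_iff_pairwise_pos.mpr ⟨hs, fun x hx y hy hxy a b ha hb hab => ?_⟩
  have hz : a • x + b • y ∈ interior s := by
    have hseg : a • x + b • y ∈ openSegment ℝ x y := ⟨a, b, ha, hb, hab, rfl⟩
    rw [openSegment_eq_Ioo' hxy] at hseg
    have hIcc : Set.Icc (min x y) (max x y) ⊆ s :=
      hs.ordConnected.out (min_rec' (· ∈ s) hx hy) (max_rec' (· ∈ s) hx hy)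
    exact interior_mono hIcc (by rwa [interior_Icc])
  obtain ⟨c, hc⟩ := h _ hz
  have hfx := mul_le_mul_of_nonneg_left (hc x hx) ha.le
  have hfy := mul_le_mul_of_nonneg_left (hc y hy) hb.le
  simp only [smul_eq_mul] at hfx hfy ⊢
  linear_combination hfx + hfy + (f (a * x + b * y) - c * (a * x + b * y)) * hab

lemma integral_comp_le_of_ae_le_tangent {α : Type*} [MeasurableSpace α] {μ : Measure α}
    [IsProbabilityMeasure μ] {f : ℝ → ℝ} {g : α → ℝ} {c : ℝ} (hg : Integrable g μ)
    (hfg : Integrable (fun x => f (g x)) μ)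
    (h : ∀ᵐ x ∂μ, f (g x) ≤ f (∫ x, g x ∂μ) + c * (g x - ∫ x, g x ∂μ)) :
    ∫ x, f (g x) ∂μ ≤ f (∫ x, g x ∂μ) := by
  set m := ∫ x, g x ∂μ
  calc ∫ x, f (g x) ∂μ ≤ ∫ x, (f m + c * (g x - m)) ∂μ :=
        integral_mono_ae hfg (by fun_prop) h
    _ = f m := by
        rw [integral_add (integrable_const _) (by fun_prop), integral_const_mul,
          integral_sub hg (integrable_const _)]
        simp [m]

lemma sq_sub_sq_add_le_mul_exp {a b : ℝ} (ha : 1 ≤ a) (hb : 1 ≤ b) :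
    b ^ 2 - a ^ 2 + a ≤ a * exp (2 * (b - a)) := by
  rcases le_or_gt (-1) (b - a) with h | h
  · have hsq : (1 + (b - a)) ^ 2 ≤ exp (2 * (b - a)) := by
      rw [show 2 * (b - a) = (b - a) + (b - a) by ring, exp_add, ← sq]
      exact pow_le_pow_left₀ (by linarith) (by linarith [add_one_le_exp (b - a)]) 2
    nlinarith [mul_le_mul_of_nonneg_left hsq (by linarith : 0 ≤ a), sq_nonneg (b - a)]
  · nlinarith [exp_pos (2 * (b - a))]

noncomputable def Phi (x : ℝ) : ℝ := x * (1 + max 0 (-log (√x))) ^ 2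

lemma Phi_of_le_one {y : ℝ} (h0 : 0 < y) (h1 : y ≤ 1) : Phi y = y * (1 - log y / 2) ^ 2 := by
  rw [Phi, log_sqrt h0.le, max_eq_right (by linarith [log_nonpos h0.le h1])]
  ring

lemma Phi_of_one_le {y : ℝ} (h1 : 1 ≤ y) : Phi y = y := by
  rw [Phi, log_sqrt (by linarith), max_eq_left (by linarith [log_nonneg h1])]
  ring

lemma Phi_sq {r : ℝ} (hr : 0 ≤ r) : Phi (r ^ 2) = (1 + max 0 (-log r)) ^ 2 * r ^ 2 := by
  rw [Phi, sqrt_sq hr, mul_comm]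

lemma Phi_le {m : ℝ} (hm : 0 ≤ m) : Phi m ≤ (1 + max 0 (-log m)) ^ 2 * m := by
  have hmax : max 0 (-log √m) ≤ max 0 (-log m) := by
    rw [log_sqrt hm]
    exact max_le (le_max_left _ _) (by linarith [le_max_left 0 (-log m), le_max_right 0 (-log m)])
  rw [Phi, mul_comm]
  gcongr

lemma Phi_le_tangent {m y : ℝ} (hm0 : 0 < m) (hm : m ≤ exp (-2)) (hy : 0 ≤ y) :
    Phi y ≤ Phi m + ((1 - log m / 2) ^ 2 - (1 - log m / 2)) * (y - m) := by
  have hlog : log m ≤ -2 := (log_le_iff_le_exp hm0).mpr hm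
  rw [Phi_of_le_one hm0 ((log_nonpos_iff hm0.le).mp (by linarith))]
  set a := 1 - log m / 2 with ha_def
  have ha : 2 ≤ a := by linarith
  rcases hy.eq_or_lt with rfl | hy0
  · simp only [Phi, zero_mul]
    nlinarith
  rcases le_total y 1 with hy1 | hy1
  · rw [Phi_of_le_one hy0 hy1]
    set b := 1 - log y / 2 with hb_def
    have hb : 1 ≤ b := by linarith [log_nonpos hy0.le hy1]
    have hexp : y * exp (2 * (b - a)) = m := by
      rw [show 2 * (b - a) = log m - log y by ring, exp_sub, exp_log hm0, exp_log hy0]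
      field_simp
    calc y * b ^ 2 = y * (b ^ 2 - a ^ 2 + a) + (a ^ 2 - a) * y := by ring
      _ ≤ y * (a * exp (2 * (b - a))) + (a ^ 2 - a) * y := by
          gcongr
          exact sq_sub_sq_add_le_mul_exp (by linarith) hb
      _ = m * a ^ 2 + (a ^ 2 - a) * (y - m) := by rw [← hexp]; ring
  · rw [Phi_of_one_le hy1]
    have hslope : 1 ≤ a ^ 2 - a := by nlinarith
    nlinarith [mul_nonneg hm0.le (by linarith : 0 ≤ a),
      mul_nonneg (by linarith : 0 ≤ a ^ 2 - a - 1) hy]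

lemma concaveOn_Phi : ConcaveOn ℝ (Set.Icc 0 (exp (-2))) Phi := by
  refine concaveOn_of_le_tangent (convex_Icc _ _) fun z hz => ?_
  rw [interior_Icc] at hz
  exact ⟨_, fun y hy => Phi_le_tangent hz.1 hz.2.le hy.1⟩

theorem stmt_10 :
    (∃ x₀ : ℝ, 0 < x₀ ∧ ConcaveOn ℝ (Set.Icc 0 x₀)
      (fun x : ℝ => x * (1 + max 0 (-Real.log (Real.sqrt x))) ^ 2)) ∧
    ∃ ε : ℝ, 0 < ε ∧
      ∀ (μ : Measure (EuclideanSpace ℝ (Fin 2))), IsProbabilityMeasure μ →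
      ∀ F : EuclideanSpace ℝ (Fin 2) → EuclideanSpace ℝ (Fin 2), Measurable F →
        Integrable (fun x => ‖F x‖ ^ 2) μ →
        Integrable (fun x => (1 + max 0 (-Real.log ‖F x‖)) ^ 2 * ‖F x‖ ^ 2) μ →
        (∫ x, ‖F x‖ ^ 2 ∂μ) ≤ ε →
        ∫ x, (1 + max 0 (-Real.log ‖F x‖)) ^ 2 * ‖F x‖ ^ 2 ∂μ ≤
          (1 + max 0 (-Real.log (∫ x, ‖F x‖ ^ 2 ∂μ))) ^ 2 * ∫ x, ‖F x‖ ^ 2 ∂μ := by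
  refine ⟨⟨exp (-2), exp_pos _, concaveOn_Phi⟩, exp (-2), exp_pos _, ?_⟩
  intro μ _ F _ hF hΦF hsmall
  set m := ∫ x, ‖F x‖ ^ 2 ∂μ
  have hm0 : 0 ≤ m := integral_nonneg fun x => by positivity
  simp_rw [← Phi_sq (norm_nonneg _)] at hΦF ⊢
  have htangent : ∀ᵐ x ∂μ, Phi (‖F x‖ ^ 2) ≤
      Phi m + ((1 - log m / 2) ^ 2 - (1 - log m / 2)) * (‖F x‖ ^ 2 - m) := by
    rcases hm0.eq_or_lt with hm | hm
    · have hF0 := (integral_eq_zero_iff_of_nonneg (fun x => by positivity) hF).mp hm.symm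
      filter_upwards [hF0] with x hx
      simp [hx, ← hm]
    · exact ae_of_all _ fun x => Phi_le_tangent hm hsmall (sq_nonneg _)
  exact (integral_comp_le_of_ae_le_tangent hF hΦF htangent).trans (Phi_le hm0)
end

section
/- Let W : ℝ² → ℝ² be log-Lipschitz, i.e. |W(x)-W(y)| ≤ C|x-y|(1 + log_-(|x-y|)) for all x,y, and let ψ^s denote its flow, ∂_s ψ^s_x = -W(ψ^s_x), ψ^0_x = x. Then for all s ∈ ℝ and x, y ∈ ℝ²: e^{-e^{C|s|}} (1 ∧ |x-y|)^{e^{C|s|}} ≤ 1 ∧ |ψ^s_x - ψ^s_y| ≤ e (1 ∧ |x-y|)^{e^{-C|s|}}. -/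
/-!
For two trajectories put `φ t = log ‖ψ t x - ψ t y‖`. By Cauchy–Schwarz and the log-Lipschitz
bound, `|φ'| ≤ ‖W (ψ t x) - W (ψ t y)‖ / ‖ψ t x - ψ t y‖ ≤ C Λ(φ)` with `Λ u = 1 + max 0 (-u)`,
i.e. `Λ (log r) = 1 + log_- r`. Since `Λ` is `1`-Lipschitz, Grönwall's inequality run forward and
backward in time gives `Λ(φ 0) e^{-C|s|} ≤ Λ(φ s) ≤ Λ(φ 0) e^{C|s|}`; the same bound keeps `φ`
finite, so distinct points never collide. Exponentiating with `1 ∧ r = e · exp (-Λ (log r))`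
yields the two Hölder bounds.
-/

open Set Filter Real
open scoped Topology RealInnerProductSpace

theorem lipschitzWith_one_add_max_zero_neg : LipschitzWith 1 fun u : ℝ => 1 + max 0 (-u) :=
  LipschitzWith.of_dist_le_mul fun u v => by
    rw [Real.dist_eq, Real.dist_eq, add_sub_add_left_eq_sub, max_comm 0, max_comm 0,
      NNReal.coe_one, one_mul]
    exact (abs_max_sub_max_le_abs _ _ 0).trans_eq (by rw [neg_sub_neg, abs_sub_comm])

theorem min_one_eq_exp_neg_max_zero_neg_log {r : ℝ} (hr : 0 < r) :
    min 1 r = exp (-max 0 (-log r)) := by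
  rcases le_total 1 r with h | h
  · rw [min_eq_left h, max_eq_left (neg_nonpos.2 (log_nonneg h)), neg_zero, exp_zero]
  · rw [min_eq_right h, max_eq_right (neg_nonneg.2 (log_nonpos hr.le h)), neg_neg, exp_log hr]

theorem comp_le_mul_exp_of_abs_deriv_le {F φ : ℝ → ℝ} {C a b : ℝ} (hF : LipschitzWith 1 F)
    (hab : a ≤ b) (hφ : ∀ t ∈ Icc a b, ∃ d, HasDerivAt φ d t ∧ |d| ≤ C * F (φ t)) :
    F (φ b) ≤ F (φ a) * exp (C * (b - a)) := by
  choose! φ' hφ hφ' using hφ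
  have hcont : ContinuousOn (F ∘ φ) (Icc a b) :=
    hF.continuous.comp_continuousOn fun t ht => (hφ t ht).continuousAt.continuousWithinAt
  refine (le_gronwallBound_of_liminf_deriv_right_le (f' := fun t => |φ' t|) (ε := 0) hcont
    ?_ le_rfl ?_ b ⟨hab, le_rfl⟩).trans_eq (gronwallBound_ε0 _ _ _)
  · intro u hu r hr
    -- `F` is 1-Lipschitz, so the slopes of `F ∘ φ` are bounded by `|slope φ u ·| → |φ' u|`.
    have hslope : Tendsto (fun z => |slope φ u z|) (𝓝[>] u) (𝓝 |φ' u|) :=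
      ((hasDerivAt_iff_tendsto_slope.1 (hφ u (Ico_subset_Icc_self hu))).mono_left
        (nhdsWithin_mono _ fun z hz => ne_of_gt hz)).abs
    refine (((hslope.eventually (eventually_lt_nhds hr)).and self_mem_nhdsWithin).mono
      ?_).frequently
    rintro z ⟨hz, hzu : u < z⟩
    have hFφ : F (φ z) - F (φ u) ≤ |φ z - φ u| := by
      simpa [Real.dist_eq] using (le_abs_self _).trans (hF.dist_le_mul (φ z) (φ u))
    calc (z - u)⁻¹ * (F (φ z) - F (φ u)) ≤ (z - u)⁻¹ * |φ z - φ u| := by gcongr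
      _ = |slope φ u z| := by
          rw [slope_def_field, abs_div, abs_of_pos (sub_pos.2 hzu), div_eq_inv_mul]
      _ < r := hz
  · intro u hu
    simpa using hφ' u (Ico_subset_Icc_self hu)

theorem comp_le_mul_exp_of_abs_deriv_le_symm {F φ : ℝ → ℝ} {C a b : ℝ} (hF : LipschitzWith 1 F)
    (hab : a ≤ b) (hφ : ∀ t ∈ Icc a b, ∃ d, HasDerivAt φ d t ∧ |d| ≤ C * F (φ t)) :
    F (φ a) ≤ F (φ b) * exp (C * (b - a)) := by
  have hrefl : ∀ t ∈ Icc a b, a + b - t ∈ Icc a b := fun t ht =>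
    ⟨by linarith [ht.2], by linarith [ht.1]⟩
  have := comp_le_mul_exp_of_abs_deriv_le (φ := fun t => φ (a + b - t)) hF hab fun t ht => by
    obtain ⟨d, hd, hdC⟩ := hφ _ (hrefl t ht)
    exact ⟨-d, hd.comp_const_sub (a + b) t, by simpa using hdC⟩
  simpa using this

theorem ContinuousOn.forall_Icc_pos_of_lower_bound {g : ℝ → ℝ} {a b m : ℝ}
    (hg : ContinuousOn g (Icc a b)) (hm : 0 < m) (ha : 0 < g a)
    (hbound : ∀ t ∈ Icc a b, (∀ u ∈ Icc a t, 0 < g u) → m ≤ g t) :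
    ∀ t ∈ Icc a b, 0 < g t := by
  by_contra! h
  have hZ : IsCompact (Icc a b ∩ g ⁻¹' Iic 0) :=
    isCompact_Icc.of_isClosed_subset (hg.preimage_isClosed_of_isClosed isClosed_Icc isClosed_Iic)
      inter_subset_left
  obtain ⟨t₀, ⟨ht₀, hgt₀ : g t₀ ≤ 0⟩, hleast⟩ := hZ.exists_isLeast (by simpa [Set.Nonempty] using h)
  have hpos : ∀ u ∈ Ico a t₀, 0 < g u := fun u hu => by
    by_contra! hgu
    exact hu.2.not_ge (hleast ⟨⟨hu.1, hu.2.le.trans ht₀.2⟩, hgu⟩)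
  have hat₀ : a ≠ t₀ := by rintro rfl; linarith
  have : m ≤ g t₀ := by
    refine ContinuousWithinAt.closure_le (s := Ico a t₀) (f := fun _ => m) ?_
      continuousWithinAt_const
      ((hg t₀ ht₀).mono (Ico_subset_Icc_self.trans (Icc_subset_Icc_right ht₀.2))) fun u hu => ?_
    · rw [closure_Ico hat₀]; exact right_mem_Icc.2 ht₀.1
    · exact hbound u ⟨hu.1, hu.2.le.trans ht₀.2⟩ fun v hv => hpos v ⟨hv.1, hv.2.trans_lt hu.2⟩
  linarith

theorem HasDerivAt.log_norm {E : Type*} [NormedAddCommGroup E] [InnerProductSpace ℝ E]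
    {f : ℝ → E} {f' : E} {t : ℝ} (hf : HasDerivAt f f' t) (h0 : f t ≠ 0) :
    HasDerivAt (fun u => Real.log ‖f u‖) (⟪f t, f'⟫ / ‖f t‖ ^ 2) t := by
  have hlog_sq := (hf.norm_sq.log (by positivity)).div_const 2
  simp only [Real.log_pow, Nat.cast_ofNat, mul_div_cancel_left₀ _ (two_ne_zero' ℝ)] at hlog_sq
  exact hlog_sq.congr_deriv (by field_simp)

section LogLipschitzFlow

variable {E : Type*} [NormedAddCommGroup E] [InnerProductSpace ℝ E] {C : ℝ} {W : E → E}
  {ψ : ℝ → E → E}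

theorem exists_hasDerivAt_log_norm_flow_sub
    (hW : ∀ x y, ‖W x - W y‖ ≤ C * ‖x - y‖ * (1 + max 0 (-log ‖x - y‖)))
    (hflow : ∀ s x, HasDerivAt (fun t => ψ t x) (-W (ψ s x)) s) {x y : E} {t : ℝ}
    (hne : ψ t x ≠ ψ t y) :
    ∃ d, HasDerivAt (fun u => log ‖ψ u x - ψ u y‖) d t ∧
      |d| ≤ C * (1 + max 0 (-log ‖ψ t x - ψ t y‖)) := by
  set δ := ψ t x - ψ t y
  have hδ : 0 < ‖δ‖ := norm_pos_iff.2 (sub_ne_zero.2 hne)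
  refine ⟨⟪δ, -W (ψ t x) - -W (ψ t y)⟫ / ‖δ‖ ^ 2,
    ((hflow t x).sub (hflow t y)).log_norm (sub_ne_zero.2 hne), ?_⟩
  rw [abs_div, abs_of_nonneg (sq_nonneg ‖δ‖), div_le_iff₀ (by positivity)]
  calc |⟪δ, -W (ψ t x) - -W (ψ t y)⟫| ≤ ‖δ‖ * ‖W (ψ t x) - W (ψ t y)‖ := by
        rw [neg_sub_neg, ← norm_sub_rev (W _)]; exact abs_real_inner_le_norm _ _
    _ ≤ ‖δ‖ * (C * ‖δ‖ * (1 + max 0 (-log ‖δ‖))) := by gcongr; exact hW _ _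
    _ = C * (1 + max 0 (-log ‖δ‖)) * ‖δ‖ ^ 2 := by ring

theorem flow_log_norm_sub_bounds
    (hW : ∀ x y, ‖W x - W y‖ ≤ C * ‖x - y‖ * (1 + max 0 (-log ‖x - y‖)))
    (hflow : ∀ s x, HasDerivAt (fun t => ψ t x) (-W (ψ s x)) s) {x y : E} {s : ℝ} (hs : 0 ≤ s)
    (hne : ∀ t ∈ Icc 0 s, ψ t x ≠ ψ t y) :
    1 + max 0 (-log ‖ψ s x - ψ s y‖) ≤ (1 + max 0 (-log ‖ψ 0 x - ψ 0 y‖)) * exp (C * s) ∧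
      1 + max 0 (-log ‖ψ 0 x - ψ 0 y‖) ≤ (1 + max 0 (-log ‖ψ s x - ψ s y‖)) * exp (C * s) := by
  have hφ : ∀ t ∈ Icc 0 s, ∃ d, HasDerivAt (fun u => log ‖ψ u x - ψ u y‖) d t ∧
      |d| ≤ C * (1 + max 0 (-log ‖ψ t x - ψ t y‖)) := fun t ht =>
    exists_hasDerivAt_log_norm_flow_sub hW hflow (hne t ht)
  have hup := comp_le_mul_exp_of_abs_deriv_le lipschitzWith_one_add_max_zero_neg hs hφ
  have hlow := comp_le_mul_exp_of_abs_deriv_le_symm lipschitzWith_one_add_max_zero_neg hs hφ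
  rw [sub_zero] at hup hlow
  exact ⟨hup, hlow⟩

theorem flow_ne_flow_of_nonneg
    (hW : ∀ x y, ‖W x - W y‖ ≤ C * ‖x - y‖ * (1 + max 0 (-log ‖x - y‖)))
    (hψ0 : ∀ x, ψ 0 x = x) (hflow : ∀ s x, HasDerivAt (fun t => ψ t x) (-W (ψ s x)) s)
    {x y : E} (hxy : x ≠ y) {s : ℝ} (hs : 0 ≤ s) : ψ s x ≠ ψ s y := by
  -- While the trajectories stay apart, Grönwall bounds `log_- ‖ψ t x - ψ t y‖` uniformly.
  set m := exp (1 - (1 + max 0 (-log ‖x - y‖)) * exp (|C| * s))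
  have hcont : ContinuousOn (fun t => ‖ψ t x - ψ t y‖) (Icc 0 s) := fun t _ =>
    ((hflow t x).continuousAt.sub (hflow t y).continuousAt).norm.continuousWithinAt
  have hbound : ∀ t ∈ Icc 0 s, (∀ u ∈ Icc 0 t, 0 < ‖ψ u x - ψ u y‖) → m ≤ ‖ψ t x - ψ t y‖ := by
    intro t ht hpos
    have hup := (flow_log_norm_sub_bounds hW hflow ht.1 fun u hu =>
      sub_ne_zero.1 (norm_pos_iff.1 (hpos u hu))).1
    rw [hψ0, hψ0] at hup
    have hexp : exp (C * t) ≤ exp (|C| * s) := exp_le_exp.2 <|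
      (mul_le_mul_of_nonneg_right (le_abs_self C) ht.1).trans
        (mul_le_mul_of_nonneg_left ht.2 (abs_nonneg C))
    calc m ≤ exp (log ‖ψ t x - ψ t y‖) := by
          refine exp_le_exp.2 ?_
          nlinarith [le_max_right 0 (-log ‖ψ t x - ψ t y‖), le_max_left 0 (-log ‖x - y‖)]
      _ = ‖ψ t x - ψ t y‖ := exp_log (hpos t ⟨ht.1, le_rfl⟩)
  exact sub_ne_zero.1 <| norm_pos_iff.1 <| hcont.forall_Icc_pos_of_lower_bound (exp_pos _)
    (by simpa [hψ0, sub_eq_zero] using hxy) hbound s ⟨hs, le_rfl⟩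

theorem flow_sub_bounds_of_nonneg
    (hW : ∀ x y, ‖W x - W y‖ ≤ C * ‖x - y‖ * (1 + max 0 (-log ‖x - y‖)))
    (hψ0 : ∀ x, ψ 0 x = x) (hflow : ∀ s x, HasDerivAt (fun t => ψ t x) (-W (ψ s x)) s)
    {x y : E} (hxy : x ≠ y) {s : ℝ} (hs : 0 ≤ s) :
    ψ s x ≠ ψ s y ∧
      1 + max 0 (-log ‖ψ s x - ψ s y‖) ≤ (1 + max 0 (-log ‖x - y‖)) * exp (C * s) ∧
      1 + max 0 (-log ‖x - y‖) ≤ (1 + max 0 (-log ‖ψ s x - ψ s y‖)) * exp (C * s) := by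
  have hbounds := flow_log_norm_sub_bounds hW hflow hs fun t ht =>
    flow_ne_flow_of_nonneg hW hψ0 hflow hxy ht.1
  rw [hψ0, hψ0] at hbounds
  exact ⟨flow_ne_flow_of_nonneg hW hψ0 hflow hxy hs, hbounds⟩

theorem flow_sub_bounds
    (hW : ∀ x y, ‖W x - W y‖ ≤ C * ‖x - y‖ * (1 + max 0 (-log ‖x - y‖)))
    (hψ0 : ∀ x, ψ 0 x = x) (hflow : ∀ s x, HasDerivAt (fun t => ψ t x) (-W (ψ s x)) s)
    {x y : E} (hxy : x ≠ y) (s : ℝ) :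
    ψ s x ≠ ψ s y ∧
      1 + max 0 (-log ‖ψ s x - ψ s y‖) ≤ (1 + max 0 (-log ‖x - y‖)) * exp (C * |s|) ∧
      1 + max 0 (-log ‖x - y‖) ≤ (1 + max 0 (-log ‖ψ s x - ψ s y‖)) * exp (C * |s|) := by
  rcases le_total 0 s with hs | hs
  · rw [abs_of_nonneg hs]
    exact flow_sub_bounds_of_nonneg hW hψ0 hflow hxy hs
  · -- `t ↦ ψ (-t)` is the flow of `-W`, which has the same modulus of continuity.
    have hW' : ∀ x y, ‖-W x - -W y‖ ≤ C * ‖x - y‖ * (1 + max 0 (-log ‖x - y‖)) := fun x y => by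
      rw [neg_sub_neg, norm_sub_rev]; exact hW x y
    have hflow' : ∀ s x, HasDerivAt (fun t => ψ (-t) x) (-(-W (ψ (-s) x))) s := fun s x => by
      simpa [Function.comp_def] using (hflow (-s) x).scomp s (hasDerivAt_neg s)
    simpa [abs_of_nonpos hs] using
      flow_sub_bounds_of_nonneg (W := fun z => -W z) (ψ := fun t => ψ (-t)) hW'
        (by simpa using hψ0) hflow' hxy (neg_nonneg.2 hs)

end LogLipschitzFlow

theorem min_one_bounds_of_le_mul_of_le_mul {r₀ r K : ℝ} (hr₀ : 0 < r₀) (hr : 0 < r) (hK : 0 < K)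
    (hup : 1 + max 0 (-log r) ≤ (1 + max 0 (-log r₀)) * K)
    (hlow : 1 + max 0 (-log r₀) ≤ (1 + max 0 (-log r)) * K) :
    exp (-K) * min 1 r₀ ^ K ≤ min 1 r ∧ min 1 r ≤ exp 1 * min 1 r₀ ^ K⁻¹ := by
  rw [min_one_eq_exp_neg_max_zero_neg_log hr₀, min_one_eq_exp_neg_max_zero_neg_log hr,
    ← exp_mul, ← exp_mul, ← exp_add, ← exp_add, exp_le_exp, exp_le_exp]
  have hdiv : max 0 (-log r₀) * K⁻¹ ≤ 1 + max 0 (-log r) := by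
    rw [← div_eq_mul_inv, div_le_iff₀ hK]; linarith [le_max_left 0 (-log r)]
  constructor <;> nlinarith [le_max_left 0 (-log r)]

theorem stmt_15_general (C : ℝ)
    (W : EuclideanSpace ℝ (Fin 2) → EuclideanSpace ℝ (Fin 2))
    (hW : ∀ x y, ‖W x - W y‖ ≤ C * ‖x - y‖ * (1 + max 0 (-Real.log ‖x - y‖)))
    (ψ : ℝ → EuclideanSpace ℝ (Fin 2) → EuclideanSpace ℝ (Fin 2))
    (hψ0 : ∀ x, ψ 0 x = x)
    (hflow : ∀ (s : ℝ) (x : EuclideanSpace ℝ (Fin 2)),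
      HasDerivAt (fun t => ψ t x) (-W (ψ s x)) s) :
    ∀ (s : ℝ) (x y : EuclideanSpace ℝ (Fin 2)),
      Real.exp (-Real.exp (C * |s|)) * (min 1 ‖x - y‖) ^ (Real.exp (C * |s|)) ≤
        min 1 ‖ψ s x - ψ s y‖ ∧
      min 1 ‖ψ s x - ψ s y‖ ≤ Real.exp 1 * (min 1 ‖x - y‖) ^ (Real.exp (-(C * |s|))) := by
  intro s x y
  rcases eq_or_ne x y with rfl | hxy
  · simp [zero_rpow (exp_pos _).ne']
  obtain ⟨hne, hup, hlow⟩ := flow_sub_bounds hW hψ0 hflow hxy s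
  rw [exp_neg (C * |s|)]
  exact min_one_bounds_of_le_mul_of_le_mul (norm_pos_iff.2 (sub_ne_zero.2 hxy))
    (norm_pos_iff.2 (sub_ne_zero.2 hne)) (exp_pos _) hup hlow

theorem stmt_15 (C : ℝ) (hC : 0 < C)
    (W : EuclideanSpace ℝ (Fin 2) → EuclideanSpace ℝ (Fin 2))
    (hW : ∀ x y, ‖W x - W y‖ ≤ C * ‖x - y‖ * (1 + max 0 (-Real.log ‖x - y‖)))
    (ψ : ℝ → EuclideanSpace ℝ (Fin 2) → EuclideanSpace ℝ (Fin 2))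
    (hψ0 : ∀ x, ψ 0 x = x)
    (hflow : ∀ (s : ℝ) (x : EuclideanSpace ℝ (Fin 2)),
      HasDerivAt (fun t => ψ t x) (-W (ψ s x)) s) :
    ∀ (s : ℝ) (x y : EuclideanSpace ℝ (Fin 2)),
      Real.exp (-Real.exp (C * |s|)) * (min 1 ‖x - y‖) ^ (Real.exp (C * |s|)) ≤
        min 1 ‖ψ s x - ψ s y‖ ∧
      min 1 ‖ψ s x - ψ s y‖ ≤ Real.exp 1 * (min 1 ‖x - y‖) ^ (Real.exp (-(C * |s|))) :=
  stmt_15_general C W hW ψ hψ0 hflow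
end
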